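/- arXiv:1004.5503 — 6 statements merged into one kernel-verified Lean document; each statement's English description precedes it below -/
import Mathlib

section
/- Let C : (Fin n → ι) → ι → k be totally antisymmetric structure constants satisfying the generalized Jacobi identity, and let N be a natural number. Define expanded structure constants C̃ on the index set ι × Fin (N+1) by C̃ ((i₁,β₁),…,(iₙ,βₙ)) (t,α) = C (i₁,…,iₙ) t if β₁+⋯+βₙ = α (as natural numbers) and C̃ ((i₁,β₁),…,(iₙ,βₙ)) (t,α) = 0 otherwise. Then C̃ is totally antisymmetric under simultaneous permutation (with sign) of its n lower index pairs and satisfies the generalized Jacobi identity on the index set ι × Fin (N+1); hence it determines a higher-order Lie algebra 𝔊(N) of order n. -/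
noncomputable section

/-- Total antisymmetry of structure constants: composing the lower indices with a
permutation multiplies by the sign. -/
def IsTotallyAntisymmetric {k ι : Type*} [CommRing k] {n : ℕ}
    (C : (Fin n → ι) → ι → k) : Prop :=
  ∀ (σ : Equiv.Perm (Fin n)) (i : Fin n → ι) (t : ι),
    C (i ∘ σ) t = (Equiv.Perm.sign σ : ℤ) • C i t

/-- The generalized Jacobi identity for structure constants of a higher-order Lie
algebra of order `n`. -/
def SatisfiesGJI {k ι : Type*} [CommRing k] [Fintype ι] {n : ℕ}
    (C : (Fin n → ι) → ι → k) : Prop :=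
  ∀ (j : Fin (2 * n - 1) → ι) (t : ι),
    (∑ σ : Equiv.Perm (Fin (2 * n - 1)),
      (Equiv.Perm.sign σ : ℤ) •
        ∑ ρ : ι,
          C (fun l : Fin n => j (σ ⟨(l : ℕ), lt_of_lt_of_le l.isLt (by omega)⟩)) ρ *
          C (fun l : Fin n =>
              if hl : (l : ℕ) = 0 then ρ
              else j (σ ⟨n + (l : ℕ) - 1, by have := l.isLt; omega⟩)) t) = 0

/-- The expanded structure constants of the power-series (Maurer-Cartan) expansion:
`C̃ ((i₁,β₁),…,(iₙ,βₙ)) (t,α) = C (i₁,…,iₙ) t` if `β₁+⋯+βₙ = α` and `0` otherwise. -/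
def expandedC {k ι : Type*} [CommRing k] {n N : ℕ}
    (C : (Fin n → ι) → ι → k) :
    (Fin n → ι × Fin (N + 1)) → (ι × Fin (N + 1)) → k :=
  fun i t =>
    if (∑ l, ((i l).2 : ℕ)) = (t.2 : ℕ) then C (fun l => (i l).1) t.1 else 0

/-!
`C̃` is `C` times the indicator that the grades `β` of the lower indices add up to the grade of
the upper one. In a term of the Jacobi sum, the first factor forces the grade of the summation
index `ρ` to be the grade sum of the first block; since the target grade is at most `N`, this
forced grade is always available in `Fin (N + 1)`, so the term is the corresponding term for `C`
times the indicator that all `2n - 1` grades add up to the target grade. That indicator is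
invariant under permutations of the lower indices, so it factors out of the antisymmetrization,
leaving the generalized Jacobi identity for `C`.
-/

/-- The summand of the generalized Jacobi identity,
`∑ ρ, C (j₁,…,jₙ) ρ * C (ρ, jₙ₊₁,…,j₂ₙ₋₁) t`. -/
def jacobiTerm {k ι : Type*} [CommRing k] [Fintype ι] {n : ℕ}
    (C : (Fin n → ι) → ι → k) (j : Fin (2 * n - 1) → ι) (t : ι) : k :=
  ∑ ρ : ι,
    C (fun l : Fin n => j ⟨l, lt_of_lt_of_le l.isLt (by omega)⟩) ρ *
    C (fun l : Fin n => if (l : ℕ) = 0 then ρ else j ⟨n + l - 1, by omega⟩) t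

theorem Fin.sum_two_mul_succ_sub_one {M : Type*} [AddCommMonoid M] (m : ℕ)
    (g : Fin (2 * (m + 1) - 1) → M) :
    ∑ x, g x = ∑ l : Fin (m + 1), g ⟨l, by omega⟩ + ∑ l : Fin m, g ⟨m + 1 + l, by omega⟩ := by
  rw [← Fin.sum_congr' g (by omega : m + 1 + m = 2 * (m + 1) - 1), Fin.sum_univ_add]
  rfl

section

variable {k ι : Type*} [CommRing k] {n N : ℕ}

theorem Fin.sum_ite_val_eq_mul_ite_add_eq {a b c : ℕ} (hc : c ≤ N) (x y : k) :
    ∑ r : Fin (N + 1), (if a = r then x else 0) * (if (r : ℕ) + b = c then y else 0) =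
      if a + b = c then x * y else 0 := by
  rw [Fin.sum_univ_eq_sum_range (fun r => (if a = r then x else 0) * (if r + b = c then y else 0))]
  simp only [ite_mul, zero_mul, Finset.sum_ite_eq, Finset.mem_range]
  split_ifs <;> first | simp | omega

theorem isTotallyAntisymmetric_expandedC {C : (Fin n → ι) → ι → k}
    (hA : IsTotallyAntisymmetric C) : IsTotallyAntisymmetric (expandedC (N := N) C) := by
  intro σ i t
  simp only [expandedC, Function.comp_apply, Equiv.sum_comp σ (fun l => ((i l).2 : ℕ))]
  split_ifs
  · exact hA σ (fun l => (i l).1) t.1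
  · rw [smul_zero]

variable [Fintype ι]

theorem satisfiesGJI_iff (C : (Fin n → ι) → ι → k) :
    SatisfiesGJI C ↔ ∀ (j : Fin (2 * n - 1) → ι) (t : ι),
      ∑ σ : Equiv.Perm (Fin (2 * n - 1)), (Equiv.Perm.sign σ : ℤ) • jacobiTerm C (j ∘ σ) t = 0 :=
  Iff.rfl

theorem jacobiTerm_expandedC [NeZero n] (C : (Fin n → ι) → ι → k)
    (f : Fin (2 * n - 1) → ι × Fin (N + 1)) (t : ι × Fin (N + 1)) :
    jacobiTerm (expandedC (N := N) C) f t =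
      if ∑ x, ((f x).2 : ℕ) = t.2 then jacobiTerm C (Prod.fst ∘ f) t.1 else 0 := by
  obtain ⟨m, rfl⟩ := Nat.exists_eq_add_one_of_ne_zero (NeZero.ne n)
  set B := ∑ l : Fin m, ((f ⟨m + 1 + l, by omega⟩).2 : ℕ)
  have hsecond : ∀ ρ : ι × Fin (N + 1),
      expandedC C (fun l : Fin (m + 1) => if (l : ℕ) = 0 then ρ else f ⟨m + 1 + l - 1, by omega⟩) t =
        if ρ.2 + B = t.2 then
          C (fun l : Fin (m + 1) => if (l : ℕ) = 0 then ρ.1 else (f ⟨m + 1 + l - 1, by omega⟩).1) t.1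
        else 0 := by
    intro ρ
    have hdeg : ∑ l : Fin (m + 1),
        (((if (l : ℕ) = 0 then ρ else f ⟨m + 1 + l - 1, by omega⟩).2 : Fin (N + 1)) : ℕ) = ρ.2 + B := by
      rw [Fin.sum_univ_succ]
      simp only [Fin.val_zero, Fin.val_succ, if_true, add_eq_zero, one_ne_zero, and_false, if_false, B]
      rfl
    simp only [expandedC, hdeg, apply_ite Prod.fst]
  have hAB : ∑ l : Fin (m + 1), ((f ⟨l, by omega⟩).2 : ℕ) + B = ∑ x, ((f x).2 : ℕ) :=
    (Fin.sum_two_mul_succ_sub_one m (fun x => ((f x).2 : ℕ))).symm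
  simp only [jacobiTerm, Fintype.sum_prod_type, hsecond]
  simp only [expandedC, Fin.sum_ite_val_eq_mul_ite_add_eq (Nat.lt_succ_iff.mp t.2.isLt), hAB,
    Finset.sum_ite_irrel, Finset.sum_const_zero]
  rfl

end

theorem satisfiesGJI_expandedC {k ι : Type*} [CommRing k] [Fintype ι] {n N : ℕ} [NeZero n]
    {C : (Fin n → ι) → ι → k} (hJ : SatisfiesGJI C) : SatisfiesGJI (expandedC (N := N) C) := by
  rw [satisfiesGJI_iff] at hJ ⊢
  intro j t
  have hdeg (σ : Equiv.Perm (Fin (2 * n - 1))) : ∑ x, ((j (σ x)).2 : ℕ) = ∑ x, ((j x).2 : ℕ) :=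
    Equiv.sum_comp σ fun x => ((j x).2 : ℕ)
  simp only [jacobiTerm_expandedC, Function.comp_apply, hdeg, smul_ite, smul_zero,
    Finset.sum_ite_irrel, Finset.sum_const_zero]
  split_ifs
  · exact hJ (Prod.fst ∘ j) t.1
  · rfl

/-- The expanded structure constants are totally antisymmetric and satisfy the
generalized Jacobi identity on `ι × Fin (N+1)`; hence they determine the expanded
higher-order Lie algebra `𝔊(N)` of order `n`. -/
theorem expandedC_isMultialgebra {k ι : Type*} [CommRing k] [Fintype ι] {n : ℕ}
    (hn : 2 ≤ n) (C : (Fin n → ι) → ι → k)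
    (hA : IsTotallyAntisymmetric C) (hJ : SatisfiesGJI C) (N : ℕ) :
    IsTotallyAntisymmetric (expandedC (N := N) C) ∧
    SatisfiesGJI (expandedC (N := N) C) :=
  have : NeZero n := ⟨by omega⟩
  ⟨isTotallyAntisymmetric_expandedC hA, satisfiesGJI_expandedC hJ⟩
end
end

section
/- Let L be a Lie algebra over a commutative ring R and let N be a natural number. The R-bilinear bracket on the R-module Fin (N+1) →₀ L determined on generators by ⁅single α x, single β y⁆ = single (α+β) ⁅x,y⁆ when α+β ≤ N, and ⁅single α x, single β y⁆ = 0 when α+β > N, is alternating and satisfies the Jacobi (Leibniz) identity; hence it makes Fin (N+1) →₀ L into a Lie algebra over R (the expanded algebra 𝔊(N) of the power-series expansion, in the binary case). -/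
/-!
On generators the bracket is `single (α + β) ⁅x, y⁆`, truncated to `0` in degree `α + β > N`.
Both sides of each identity on generators live in a single degree (`α + β` resp. `α + β + γ`),
so they are truncated together and reduce to antisymmetry and the Leibniz identity in `L`;
bilinearity extends the identities from generators to all of `Fin (N + 1) →₀ L`.
-/

open Finsupp

section BilinearOnFinsupp

variable {R ι M P : Type*} [CommSemiring R] [AddCommMonoid M] [Module R M]
  [AddCommGroup P] [Module R P]

theorem Finsupp.bilinear_self_eq_zero_of_single (B : (ι →₀ M) →ₗ[R] (ι →₀ M) →ₗ[R] P)
    (h_swap : ∀ a b x y, B (single a x) (single b y) + B (single b y) (single a x) = 0)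
    (h_self : ∀ a x, B (single a x) (single a x) = 0) (u : ι →₀ M) : B u u = 0 := by
  have h_flip : B.flip = -B :=
    lhom_ext fun b y => lhom_ext fun a x => by
      simpa [eq_neg_iff_add_eq_zero, add_comm] using h_swap a b x y
  induction u using Finsupp.induction_linear with
  | zero => simp
  | add f g hf hg =>
    have h_gf : B g f = -B f g := by simpa using congr($h_flip f g)
    simp [hf, hg, h_gf]
  | single a x => exact h_self a x

theorem Finsupp.leibniz_of_single (B : (ι →₀ M) →ₗ[R] (ι →₀ M) →ₗ[R] (ι →₀ M))
    (h : ∀ a b c x y z, B (single a x) (B (single b y) (single c z)) =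
      B (B (single a x) (single b y)) (single c z) + B (single b y) (B (single a x) (single c z)))
    (u v w : ι →₀ M) : B u (B v w) = B (B u v) w + B v (B u w) := by
  induction u using Finsupp.induction_linear with
  | zero => simp
  | add f g hf hg => simp only [map_add, LinearMap.add_apply, hf, hg]; abel
  | single a x =>
    induction v using Finsupp.induction_linear with
    | zero => simp
    | add f g hf hg => simp only [map_add, LinearMap.add_apply, hf, hg]; abel
    | single b y =>
      induction w using Finsupp.induction_linear with
      | zero => simp
      | add f g hf hg => simp only [map_add, hf, hg]; abel
      | single c z => exact h a b c x y z

end BilinearOnFinsupp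

namespace ExpandedBracket

noncomputable def truncSingle {L : Type*} [AddZeroClass L] (N n : ℕ) : L →+ (Fin (N + 1) →₀ L) :=
  if h : n ≤ N then singleAddHom ⟨n, by omega⟩ else 0

section

variable {L : Type*} [AddZeroClass L] {N n : ℕ} (x : L)

theorem truncSingle_def :
    truncSingle N n x = if h : n ≤ N then single ⟨n, by omega⟩ x else 0 := by
  unfold truncSingle; split_ifs <;> rfl

theorem truncSingle_of_le (h : n ≤ N) : truncSingle N n x = single ⟨n, by omega⟩ x := by
  rw [truncSingle_def, dif_pos h]

theorem truncSingle_of_lt (h : N < n) : truncSingle N n x = 0 := by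
  rw [truncSingle_def, dif_neg (by omega)]

end

variable {R L : Type*} [CommRing R] [LieRing L] [LieAlgebra R L] {N : ℕ}
  {B : (Fin (N + 1) →₀ L) →ₗ[R] (Fin (N + 1) →₀ L) →ₗ[R] (Fin (N + 1) →₀ L)}

section

variable (hB : ∀ (α β : Fin (N + 1)) (x y : L),
  B (single α x) (single β y) = truncSingle N (α + β) ⁅x, y⁆)
include hB

theorem bracket_single_truncSingle (α : Fin (N + 1)) (n : ℕ) (x y : L) :
    B (single α x) (truncSingle N n y) = truncSingle N (α + n) ⁅x, y⁆ := by
  rcases le_or_gt n N with h | h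
  · rw [truncSingle_of_le _ h, hB]
  · rw [truncSingle_of_lt _ h, truncSingle_of_lt _ (by omega), map_zero]

theorem bracket_truncSingle_single (n : ℕ) (β : Fin (N + 1)) (x y : L) :
    B (truncSingle N n x) (single β y) = truncSingle N (n + β) ⁅x, y⁆ := by
  rcases le_or_gt n N with h | h
  · rw [truncSingle_of_le _ h, hB]
  · rw [truncSingle_of_lt _ h, truncSingle_of_lt _ (by omega), map_zero, LinearMap.zero_apply]

theorem bracket_single_add_swap (α β : Fin (N + 1)) (x y : L) :
    B (single α x) (single β y) + B (single β y) (single α x) = 0 := by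
  rw [hB, hB, add_comm (β : ℕ), ← map_add, ← lie_skew, neg_add_cancel, map_zero]

theorem bracket_single_self (α : Fin (N + 1)) (x : L) : B (single α x) (single α x) = 0 := by
  rw [hB, lie_self, map_zero]

theorem leibniz_single (α β γ : Fin (N + 1)) (x y z : L) :
    B (single α x) (B (single β y) (single γ z)) =
      B (B (single α x) (single β y)) (single γ z) +
        B (single β y) (B (single α x) (single γ z)) := by
  rw [hB β, hB α β, hB α γ, bracket_single_truncSingle hB, bracket_truncSingle_single hB,
    bracket_single_truncSingle hB, Nat.add_left_comm (β : ℕ), ← Nat.add_assoc, ← map_add,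
    leibniz_lie]

end

end ExpandedBracket

/-- The power-series expanded bracket on `Fin (N+1) →₀ L`, determined on generators by
`⁅single α x, single β y⁆ = single (α+β) ⁅x,y⁆` when `α+β ≤ N` and `0` otherwise, is
alternating and satisfies the Jacobi (Leibniz) identity, hence makes `Fin (N+1) →₀ L`
into a Lie algebra over `R` (the expanded algebra `𝔊(N)` in the binary case). -/
theorem expanded_bracket_isLieAlgebra {R L : Type*} [CommRing R] [LieRing L]
    [LieAlgebra R L] (N : ℕ)
    (B : (Fin (N + 1) →₀ L) →ₗ[R] (Fin (N + 1) →₀ L) →ₗ[R] (Fin (N + 1) →₀ L))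
    (hB : ∀ (α β : Fin (N + 1)) (x y : L),
      B (Finsupp.single α x) (Finsupp.single β y) =
        if h : (α : ℕ) + (β : ℕ) ≤ N
        then Finsupp.single (⟨(α : ℕ) + (β : ℕ), by omega⟩ : Fin (N + 1)) ⁅x, y⁆
        else 0) :
    (∀ u : Fin (N + 1) →₀ L, B u u = 0) ∧
    (∀ u v w : Fin (N + 1) →₀ L, B u (B v w) = B (B u v) w + B v (B u w)) := by
  have hB_trunc : ∀ α β x y,
      B (single α x) (single β y) = ExpandedBracket.truncSingle N (α + β) ⁅x, y⁆ :=
    fun α β x y => by rw [hB, ExpandedBracket.truncSingle_def]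
  exact ⟨bilinear_self_eq_zero_of_single B (ExpandedBracket.bracket_single_add_swap hB_trunc)
      (ExpandedBracket.bracket_single_self hB_trunc),
    leibniz_of_single B (ExpandedBracket.leibniz_single hB_trunc)⟩
end

section
/- (0_S-reduction of an S-expanded multialgebra.) Let S be a finite commutative semigroup possessing an absorbing (zero) element z, i.e. z·s = z for all s ∈ S, and let C : (Fin n → ι) → ι → k be totally antisymmetric structure constants satisfying the generalized Jacobi identity. Define reduced structure constants on the index set ι × {s : S // s ≠ z} by C̃ ((A₁,α₁),…,(Aₙ,αₙ)) (t,γ) = C (A₁,…,Aₙ) t if α₁·⋯·αₙ = γ in S, and 0 otherwise. Then C̃ is totally antisymmetric under simultaneous permutation (with sign) of its n lower index pairs and satisfies the generalized Jacobi identity on ι × {s : S // s ≠ z} (with the intermediate summation index ranging over this set); hence the 0_S-reduced S-expanded multialgebra 𝔊_R is a higher-order Lie algebra of order n. -/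
open scoped Classical

noncomputable section

/-- The product `α₁·α₂·⋯·αₙ` of a family of semigroup elements, computed in the
monoid `WithOne S` (for `n ≥ 1` it is the genuine semigroup product, coerced). -/
def wprod {S : Type*} [CommSemigroup S] {n : ℕ} (f : Fin n → S) : WithOne S :=
  ∏ l, (f l : WithOne S)

/-- The `0_S`-reduced `S`-expanded structure constants on `ι × {s : S // s ≠ z}`:
`C̃ ((A₁,α₁),…,(Aₙ,αₙ)) (t,γ) = C (A₁,…,Aₙ) t` if `α₁·⋯·αₙ = γ` in `S`, else `0`. -/
def reducedSExpandedC {k ι S : Type*} [CommRing k] [CommSemigroup S] (z : S) {n : ℕ}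
    (C : (Fin n → ι) → ι → k) :
    (Fin n → ι × {s : S // s ≠ z}) → (ι × {s : S // s ≠ z}) → k :=
  fun A t =>
    if wprod (fun l => ((A l).2 : S)) = (((t.2 : S) : S) : WithOne S)
    then C (fun l => (A l).1) t.1 else 0

/-!
The reduced constants are graded by `S`: `C̃ A t` vanishes unless the grades of `A` multiply to
the grade of `t`. When two of them are contracted over a middle index `(ρ, s)`, the grade `s` is
forced to be the product `a` of the first `n` grades; the only way to lose a term by excluding
`z` from the grades is `a = z`, but then the product of all `2n - 1` grades is `z` as well, since
`z` is absorbing, and the outer factor vanishes anyway. So every term of the reduced Jacobiator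
is the corresponding term of the Jacobiator of `C`, multiplied by the indicator that the product
of all `2n - 1` grades is the outer grade. That product does not depend on the permutation, so
the indicator factors out of the alternating sum. Antisymmetry holds for the same reason.
-/

open Finset

section WithOne

variable {S : Type*} [CommSemigroup S]

lemma wprod_comp_perm {n : ℕ} (f : Fin n → S) (σ : Equiv.Perm (Fin n)) :
    wprod (f ∘ σ) = wprod f :=
  Equiv.prod_comp σ fun l => (f l : WithOne S)

lemma wprod_cons {n : ℕ} (a : S) (f : Fin n → S) :
    wprod (Fin.cons a f : Fin (n + 1) → S) = a * wprod f := by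
  simp only [wprod, Fin.prod_univ_succ, Fin.cons_zero, Fin.cons_succ]

lemma WithOne.exists_coe_mul_eq_coe (a : S) (b : WithOne S) :
    ∃ c : S, (a : WithOne S) * b = c := by
  induction b using WithOne.recOneCoe with
  | one => exact ⟨a, mul_one _⟩
  | coe b => exact ⟨a * b, rfl⟩

lemma exists_wprod_eq_coe {n : ℕ} (f : Fin (n + 1) → S) : ∃ a : S, wprod f = a := by
  rw [← Fin.cons_self_tail f, wprod_cons]
  exact WithOne.exists_coe_mul_eq_coe _ _

lemma WithOne.coe_mul_of_absorbing {z : S} (hz : ∀ s : S, z * s = z) (b : WithOne S) :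
    (z : WithOne S) * b = z := by
  induction b using WithOne.recOneCoe with
  | one => exact mul_one _
  | coe b => exact congrArg _ (hz b)

lemma sum_ite_coe_eq_mul_ite_mul_eq [Fintype S] {k : Type*} [NonUnitalNonAssocSemiring k]
    {z : S} (hz : ∀ s : S, z * s = z) (a : S) (b : WithOne S) (γ : {s : S // s ≠ z})
    (x y : k) :
    ∑ s : {s : S // s ≠ z}, (if (a : WithOne S) = ((s : S) : WithOne S) then x else 0) *
        (if ((s : S) : WithOne S) * b = ((γ : S) : WithOne S) then y else 0) =
      if (a : WithOne S) * b = ((γ : S) : WithOne S) then x * y else 0 := by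
  by_cases ha : a = z
  · subst ha
    have hγ : ((γ : S) : WithOne S) ≠ a := fun h => γ.2 (WithOne.coe_inj.mp h)
    rw [WithOne.coe_mul_of_absorbing hz, if_neg hγ.symm]
    refine sum_eq_zero fun s _ => ?_
    rw [if_neg fun h => s.2 (WithOne.coe_inj.mp h).symm, zero_mul]
  · rw [Fintype.sum_eq_single ⟨a, ha⟩ fun s hs => ?_]
    · simp only [if_true, mul_ite, mul_zero]
    · rw [if_neg fun h => hs (Subtype.ext (WithOne.coe_inj.mp h).symm), zero_mul]

end WithOne

section GJIArgs

variable {X : Type*}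

/- For `u = (u₁, …, u₂ₙ₋₁)`, the inner bracket of the Jacobi identity takes `(u₁, …, uₙ)`, the
outer one `(ρ, uₙ₊₁, …, u₂ₙ₋₁)`, and `gjiTailArgs u = (uₙ₊₁, …, u₂ₙ₋₁)` (with `n = m + 1`). -/

def gjiInnerArgs {n : ℕ} (u : Fin (2 * n - 1) → X) : Fin n → X :=
  fun l => u ⟨l, lt_of_lt_of_le l.isLt (by omega)⟩

def gjiOuterArgs {n : ℕ} (u : Fin (2 * n - 1) → X) (ρ : X) : Fin n → X :=
  fun l => if hl : (l : ℕ) = 0 then ρ else u ⟨n + l - 1, by have := l.isLt; omega⟩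

def gjiTailArgs {m : ℕ} (u : Fin (2 * (m + 1) - 1) → X) : Fin m → X :=
  fun l => u ⟨m + 1 + l, by omega⟩

lemma gjiOuterArgs_eq_cons {m : ℕ} (u : Fin (2 * (m + 1) - 1) → X) (ρ : X) :
    gjiOuterArgs u ρ = Fin.cons ρ (gjiTailArgs u) := by
  ext l
  cases l using Fin.cases with
  | zero => rfl
  | succ l => simp [gjiOuterArgs, gjiTailArgs]

lemma prod_eq_prod_gjiInnerArgs_mul_prod_gjiTailArgs {M : Type*} [CommMonoid M] {m : ℕ}
    (u : Fin (2 * (m + 1) - 1) → M) :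
    ∏ w, u w = (∏ l, gjiInnerArgs u l) * ∏ l, gjiTailArgs u l := by
  rw [← Equiv.prod_comp (finCongr (by omega : m + 1 + m = 2 * (m + 1) - 1)), Fin.prod_univ_add]
  rfl

end GJIArgs

def jacobiator {k ι : Type*} [CommRing k] [Fintype ι] {n : ℕ} (C : (Fin n → ι) → ι → k)
    (j : Fin (2 * n - 1) → ι) (t : ι) : k :=
  ∑ σ : Equiv.Perm (Fin (2 * n - 1)), (Equiv.Perm.sign σ : ℤ) •
    ∑ ρ : ι, C (gjiInnerArgs (j ∘ σ)) ρ * C (gjiOuterArgs (j ∘ σ) ρ) t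

lemma satisfiesGJI_iff_s6 {k ι : Type*} [CommRing k] [Fintype ι] {n : ℕ}
    (C : (Fin n → ι) → ι → k) : SatisfiesGJI C ↔ ∀ j t, jacobiator C j t = 0 :=
  Iff.rfl

section Reduced

variable {k ι S : Type*} [CommRing k] [CommSemigroup S] {z : S}

lemma reducedSExpandedC_cons {n : ℕ} (C : (Fin (n + 1) → ι) → ι → k)
    (x : ι × {s : S // s ≠ z}) (B : Fin n → ι × {s : S // s ≠ z}) (t : ι × {s : S // s ≠ z}) :
    reducedSExpandedC z C (Fin.cons x B) t =
      if ((x.2 : S) : WithOne S) * wprod (fun l => ((B l).2 : S)) = ((t.2 : S) : WithOne S)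
      then C (Fin.cons x.1 fun l => (B l).1) t.1 else 0 := by
  have hsnd : (fun l => (((Fin.cons x B : Fin (n + 1) → ι × {s : S // s ≠ z}) l).2 : S)) =
      Fin.cons (x.2 : S) fun l => ((B l).2 : S) := by
    ext l; cases l using Fin.cases <;> simp
  have hfst : (fun l => ((Fin.cons x B : Fin (n + 1) → ι × {s : S // s ≠ z}) l).1) =
      Fin.cons x.1 fun l => (B l).1 := by
    ext l; cases l using Fin.cases <;> simp
  rw [reducedSExpandedC, hsnd, hfst, wprod_cons]

/- The empty product is `1 : WithOne S`, which is not a grade. -/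
lemma reducedSExpandedC_fin_zero (C : (Fin 0 → ι) → ι → k) (A : Fin 0 → ι × {s : S // s ≠ z})
    (t : ι × {s : S // s ≠ z}) : reducedSExpandedC z C A t = 0 :=
  if_neg fun h => by simp [wprod] at h

theorem IsTotallyAntisymmetric.reducedSExpandedC {n : ℕ} {C : (Fin n → ι) → ι → k}
    (hA : IsTotallyAntisymmetric C) (z : S) : IsTotallyAntisymmetric (reducedSExpandedC z C) := by
  intro σ i t
  have hgrade : wprod (fun l => ((i (σ l)).2 : S)) = wprod fun l => ((i l).2 : S) :=
    wprod_comp_perm (fun l => ((i l).2 : S)) σ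
  simp only [_root_.reducedSExpandedC, Function.comp_apply, hgrade]
  split_ifs
  · exact hA σ (fun l => (i l).1) t.1
  · rw [smul_zero]

variable [Fintype ι] [Fintype S]

lemma sum_reducedSExpandedC_mul_cons (hz : ∀ s : S, z * s = z) {p m : ℕ}
    (C₁ : (Fin (p + 1) → ι) → ι → k) (C₂ : (Fin (m + 1) → ι) → ι → k)
    (A : Fin (p + 1) → ι × {s : S // s ≠ z}) (B : Fin m → ι × {s : S // s ≠ z})
    (t : ι × {s : S // s ≠ z}) :
    ∑ ρ, reducedSExpandedC z C₁ A ρ * reducedSExpandedC z C₂ (Fin.cons ρ B) t =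
      if wprod (fun l => ((A l).2 : S)) * wprod (fun l => ((B l).2 : S)) = ((t.2 : S) : WithOne S)
      then ∑ ρ, C₁ (fun l => (A l).1) ρ * C₂ (Fin.cons ρ fun l => (B l).1) t.1 else 0 := by
  obtain ⟨a, ha⟩ := exists_wprod_eq_coe fun l => ((A l).2 : S)
  rw [ha, ← sum_const_zero, ← sum_ite_irrel, Fintype.sum_prod_type]
  refine sum_congr rfl fun ρ _ => ?_
  simp only [reducedSExpandedC_cons]
  simp only [_root_.reducedSExpandedC, ha]
  exact sum_ite_coe_eq_mul_ite_mul_eq hz a _ t.2 _ _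

lemma jacobiator_reducedSExpandedC (hz : ∀ s : S, z * s = z) {m : ℕ}
    (C : (Fin (m + 1) → ι) → ι → k) (j : Fin (2 * (m + 1) - 1) → ι × {s : S // s ≠ z})
    (t : ι × {s : S // s ≠ z}) :
    jacobiator (reducedSExpandedC z C) j t =
      if wprod (fun w => ((j w).2 : S)) = ((t.2 : S) : WithOne S)
      then jacobiator C (fun w => (j w).1) t.1 else 0 := by
  rw [jacobiator, jacobiator, ← sum_const_zero, ← sum_ite_irrel]
  refine sum_congr rfl fun σ _ => ?_
  have hgrade : wprod (fun l => ((gjiInnerArgs (j ∘ σ) l).2 : S)) *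
      wprod (fun l => ((gjiTailArgs (j ∘ σ) l).2 : S)) = wprod (fun w => ((j w).2 : S)) := by
    rw [← wprod_comp_perm _ σ]
    exact (prod_eq_prod_gjiInnerArgs_mul_prod_gjiTailArgs
      fun w => (((j (σ w)).2 : S) : WithOne S)).symm
  simp only [gjiOuterArgs_eq_cons, sum_reducedSExpandedC_mul_cons hz, hgrade]
  rw [smul_ite, smul_zero]
  rfl

theorem SatisfiesGJI.reducedSExpandedC (hz : ∀ s : S, z * s = z) {n : ℕ}
    {C : (Fin n → ι) → ι → k} (hJ : SatisfiesGJI C) : SatisfiesGJI (reducedSExpandedC z C) := by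
  rw [satisfiesGJI_iff_s6] at hJ ⊢
  intro j t
  cases n with
  | zero => simp [jacobiator, reducedSExpandedC_fin_zero]
  | succ m => rw [jacobiator_reducedSExpandedC hz, hJ, ite_self]

end Reduced

theorem reducedSExpandedC_isMultialgebra_general {k ι S : Type*} [CommRing k] [Fintype ι]
    [CommSemigroup S] [Fintype S] {n : ℕ}
    (z : S) (hz : ∀ s : S, z * s = z)
    (C : (Fin n → ι) → ι → k)
    (hA : IsTotallyAntisymmetric C) (hJ : SatisfiesGJI C) :
    IsTotallyAntisymmetric (reducedSExpandedC z C) ∧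
    SatisfiesGJI (reducedSExpandedC z C) :=
  ⟨hA.reducedSExpandedC z, hJ.reducedSExpandedC hz⟩

/-- (0_S-reduction of an S-expanded multialgebra.) If `S` is a finite abelian
semigroup with an absorbing element `z` and `C` are totally antisymmetric structure
constants satisfying the generalized Jacobi identity, then the reduced structure
constants are totally antisymmetric and satisfy the generalized Jacobi identity on
`ι × {s : S // s ≠ z}`; hence the `0_S`-reduced `S`-expanded multialgebra `𝔊_R` is a
higher-order Lie algebra of order `n`. -/
theorem reducedSExpandedC_isMultialgebra {k ι S : Type*} [CommRing k] [Fintype ι]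
    [CommSemigroup S] [Fintype S] {n : ℕ} (hn : 2 ≤ n)
    (z : S) (hz : ∀ s : S, z * s = z)
    (C : (Fin n → ι) → ι → k)
    (hA : IsTotallyAntisymmetric C) (hJ : SatisfiesGJI C) :
    IsTotallyAntisymmetric (reducedSExpandedC z C) ∧
    SatisfiesGJI (reducedSExpandedC z C) :=
  reducedSExpandedC_isMultialgebra_general z hz C hA hJ
end
end

section
/- Let S be a commutative semigroup with an absorbing element z (z·s = z for all s ∈ S) and L a Lie algebra over a commutative ring R. The R-bilinear bracket on the R-module {s : S // s ≠ z} →₀ L determined on generators by ⁅single s x, single t y⁆ = single (s·t) ⁅x,y⁆ if s·t ≠ z, and ⁅single s x, single t y⁆ = 0 if s·t = z, is alternating and satisfies the Jacobi (Leibniz) identity; hence it makes {s : S // s ≠ z} →₀ L into a Lie algebra over R (the 0_S-reduced S-expanded Lie algebra, in the binary case). -/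
open scoped Classical

/-!
Antisymmetry and the Leibniz identity are bi- and trilinear, so it suffices to check them on
generators `single s x`. There the bracket is `single (s·t) ⁅x, y⁆` under the convention
`single z _ = 0`. Because `z` is absorbing, the convention survives further brackets: an iterated
bracket of generators is the conventional `single` at the product of the indices. The identities
then reduce to those of `L` together with commutativity and associativity in `S`.
-/

open Finsupp

namespace Finsupp

variable {R α M N : Type*} [CommSemiring R] [AddCommMonoid M] [Module R M]
  [AddCommGroup N] [Module R N]

theorem isAlt_of_single (B : (α →₀ M) →ₗ[R] (α →₀ M) →ₗ[R] N)
    (hskew : ∀ s t x y, B (single s x) (single t y) = -B (single t y) (single s x))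
    (hdiag : ∀ s x, B (single s x) (single s x) = 0) : B.IsAlt := by
  have hflip : B.flip = -B := by
    ext s x t y : 4
    simpa using hskew t s y x
  intro u
  induction u using Finsupp.induction with
  | zero => simp
  | single_add s x f _ _ hf =>
    have hcross : B f (single s x) = -B (single s x) f := LinearMap.congr_fun₂ hflip _ _
    simp only [map_add, LinearMap.add_apply, hdiag, hf, hcross]
    abel

theorem leibniz_of_single_s8 (B : (α →₀ M) →ₗ[R] (α →₀ M) →ₗ[R] (α →₀ M))
    (hsingle : ∀ s t r x y c, B (single s x) (B (single t y) (single r c)) =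
      B (B (single s x) (single t y)) (single r c) + B (single t y) (B (single s x) (single r c)))
    (u v w : α →₀ M) : B u (B v w) = B (B u v) w + B v (B u w) := by
  -- `compB u v w = B u (B v w)`
  let compB := ((LinearMap.llcomp R _ _ _).comp B).compl₂ B
  have key : compB = (LinearMap.llcomp R _ _ _ B).comp B + compB.flip := by
    ext s x t y r c : 6
    simpa [compB] using hsingle s t r x y c
  simpa [compB] using LinearMap.congr_fun (LinearMap.congr_fun₂ key u v) w

end Finsupp

section ReducedSingle

variable {S M : Type*} [AddZeroClass M]

noncomputable def reducedSingle (z a : S) : M →+ ({s : S // s ≠ z} →₀ M) :=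
  if h : a = z then 0 else singleAddHom ⟨a, h⟩

theorem reducedSingle_self (z : S) : (reducedSingle z z : M →+ _) = 0 := dif_pos rfl

theorem reducedSingle_of_ne {z a : S} (h : a ≠ z) :
    (reducedSingle z a : M →+ _) = singleAddHom ⟨a, h⟩ := dif_neg h

end ReducedSingle

section ReducedBracket

variable {R L S : Type*} [CommRing R] [LieRing L] [LieAlgebra R L] [CommSemigroup S] {z : S}
  {B : ({s : S // s ≠ z} →₀ L) →ₗ[R] ({s : S // s ≠ z} →₀ L) →ₗ[R] ({s : S // s ≠ z} →₀ L)}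

variable (hB : ∀ (s t : {s : S // s ≠ z}) (x y : L),
      B (single s x) (single t y) =
        if h : (s : S) * (t : S) = z then 0 else single ⟨(s : S) * (t : S), h⟩ ⁅x, y⁆)
include hB

theorem bracket_single_single (s t : {s : S // s ≠ z}) (x y : L) :
    B (single s x) (single t y) = reducedSingle z ((s : S) * t) ⁅x, y⁆ := by
  rw [hB, reducedSingle]
  split_ifs <;> rfl

theorem reducedBracket_skew_single (s t : {s : S // s ≠ z}) (x y : L) :
    B (single s x) (single t y) = -B (single t y) (single s x) := by
  rw [bracket_single_single hB, bracket_single_single hB, mul_comm (t : S), ← map_neg, lie_skew]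

theorem reducedBracket_self_single (s : {s : S // s ≠ z}) (x : L) :
    B (single s x) (single s x) = 0 := by
  rw [bracket_single_single hB, lie_self, map_zero]

variable (hz : ∀ s : S, z * s = z)
include hz

theorem bracket_reducedSingle_single (a : S) (t : {s : S // s ≠ z}) (x y : L) :
    B (reducedSingle z a x) (single t y) = reducedSingle z (a * t) ⁅x, y⁆ := by
  by_cases ha : a = z
  · simp [ha, hz, reducedSingle_self]
  · simpa [reducedSingle_of_ne ha] using bracket_single_single hB ⟨a, ha⟩ t x y

theorem bracket_single_reducedSingle (s : {s : S // s ≠ z}) (a : S) (x y : L) :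
    B (single s x) (reducedSingle z a y) = reducedSingle z (s * a) ⁅x, y⁆ := by
  by_cases ha : a = z
  · simp [ha, mul_comm _ z, hz, reducedSingle_self]
  · simpa [reducedSingle_of_ne ha] using bracket_single_single hB s ⟨a, ha⟩ x y

theorem reducedBracket_leibniz_single (s t r : {s : S // s ≠ z}) (x y c : L) :
    B (single s x) (B (single t y) (single r c)) =
      B (B (single s x) (single t y)) (single r c) +
        B (single t y) (B (single s x) (single r c)) := by
  rw [bracket_single_single hB t r, bracket_single_single hB s t, bracket_single_single hB s r,
    bracket_single_reducedSingle hB hz, bracket_reducedSingle_single hB hz,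
    bracket_single_reducedSingle hB hz, ← mul_assoc, mul_left_comm (t : S), ← mul_assoc,
    ← map_add, leibniz_lie]

end ReducedBracket

/-- Let `z` be an absorbing element of the abelian semigroup `S`. The `0_S`-reduced
`S`-expanded bracket on `{s : S // s ≠ z} →₀ L`, determined on generators by
`⁅single s x, single t y⁆ = single (s·t) ⁅x,y⁆` when `s·t ≠ z` and `0` when
`s·t = z`, is alternating and satisfies the Jacobi (Leibniz) identity; hence it
makes `{s : S // s ≠ z} →₀ L` into a Lie algebra over `R`
(the `0_S`-reduced `S`-expanded Lie algebra, in the binary case). -/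
theorem reduced_sExpanded_bracket_isLieAlgebra {R L S : Type*} [CommRing R]
    [LieRing L] [LieAlgebra R L] [CommSemigroup S]
    (z : S) (hz : ∀ s : S, z * s = z)
    (B : ({s : S // s ≠ z} →₀ L) →ₗ[R] ({s : S // s ≠ z} →₀ L) →ₗ[R]
          ({s : S // s ≠ z} →₀ L))
    (hB : ∀ (s t : {s : S // s ≠ z}) (x y : L),
      B (Finsupp.single s x) (Finsupp.single t y) =
        if h : (s : S) * (t : S) = z then 0
        else Finsupp.single (⟨(s : S) * (t : S), h⟩ : {s : S // s ≠ z}) ⁅x, y⁆) :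
    (∀ u : {s : S // s ≠ z} →₀ L, B u u = 0) ∧
    (∀ u v w : {s : S // s ≠ z} →₀ L,
      B u (B v w) = B (B u v) w + B v (B u w)) :=
  ⟨isAlt_of_single B (reducedBracket_skew_single hB) (reducedBracket_self_single hB),
    leibniz_of_single_s8 B (reducedBracket_leibniz_single hB hz)⟩
end

section
/- Let S be a commutative semigroup, L a Lie algebra over a commutative ring R, and equip S →₀ L with the S-expanded bracket determined by ⁅single s x, single t y⁆ = single (s·t) ⁅x,y⁆. Let I be a type, (V_p)_{p ∈ I} a family of R-submodules of L, and i : I → I → Set I such that ⁅V_p, V_q⁆ ⊆ Σ_{r ∈ i(p,q)} V_r (the submodule generated by the V_r with r ∈ i(p,q)) for all p, q ∈ I, and let (S_p)_{p ∈ I} be subsets of S satisfying the resonance condition: for all p, q ∈ I, s ∈ S_p and t ∈ S_q, the product s·t belongs to ⋂_{r ∈ i(p,q)} S_r. Then the R-submodule of S →₀ L generated by { single s v : p ∈ I, s ∈ S_p, v ∈ V_p } is closed under the bracket, i.e. it is a Lie subalgebra of the S-expanded Lie algebra (the resonant subalgebra 𝔊_R = ⊕_{p ∈ I} S_p ⊗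 V_p). -/
/-!
By bilinearity it suffices to bracket two generators `single s x` and `single t y`. The result
`single (s * t) ⁅x, y⁆` has `⁅x, y⁆` in the sum of the `V r`, `r ∈ idx p q`, and resonance puts
`s * t` into every one of the matching `Sp r`, so it is a sum of generators.
-/

namespace Submodule

variable {R M : Type*} [CommSemiring R] [AddCommMonoid M] [Module R M]

theorem apply_mem_span_of_forall_mem_span (B : M →ₗ[R] M →ₗ[R] M) {s : Set M}
    (h : ∀ a ∈ s, ∀ b ∈ s, B a b ∈ span R s) {u v : M} (hu : u ∈ span R s)
    (hv : v ∈ span R s) : B u v ∈ span R s := by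
  have huv := apply_mem_map₂ B hu hv
  rw [map₂_span_span] at huv
  refine span_le.2 ?_ huv
  rintro _ ⟨a, ha, b, hb, rfl⟩
  exact h a ha b hb

end Submodule

section Resonant

variable {R L S I : Type*} [CommSemiring R] [AddCommMonoid L] [Module R L]

/-- The paper's resonant subalgebra `𝔊_R = ⊕_p Sp p ⊗ V p`, as a submodule of `S →₀ L`. -/
noncomputable def resonantSpan (V : I → Submodule R L) (Sp : I → Set S) : Submodule R (S →₀ L) :=
  Submodule.span R {f | ∃ p : I, ∃ s ∈ Sp p, ∃ x ∈ V p, f = Finsupp.single s x}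

variable {V : I → Submodule R L} {Sp : I → Set S}

theorem single_mem_resonantSpan {p : I} {s : S} {x : L} (hs : s ∈ Sp p) (hx : x ∈ V p) :
    Finsupp.single s x ∈ resonantSpan V Sp :=
  Submodule.subset_span ⟨p, s, hs, x, hx, rfl⟩

theorem single_mem_resonantSpan_of_mem_iSup {T : Set I} {s : S} {z : L}
    (hs : ∀ r ∈ T, s ∈ Sp r) (hz : z ∈ ⨆ r ∈ T, V r) :
    Finsupp.single s z ∈ resonantSpan V Sp := by
  have hle : ⨆ r ∈ T, V r ≤ (resonantSpan V Sp).comap (Finsupp.lsingle s) :=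
    iSup₂_le fun r hr _ hx => single_mem_resonantSpan (hs r hr) hx
  exact hle hz

end Resonant

/-- (Resonant subalgebra of the S-expanded Lie algebra, binary case.) Let `S →₀ L`
carry the `S`-expanded bracket `⁅single s x, single t y⁆ = single (s·t) ⁅x,y⁆`.
Given submodules `V p` of `L` with `⁅V p, V q⁆ ⊆ Σ_{r ∈ idx p q} V r` and subsets
`Sp p ⊆ S` in resonance (`s ∈ Sp p, t ∈ Sp q → s·t ∈ ⋂_{r ∈ idx p q} Sp r`), the
submodule generated by `{single s v | p ∈ I, s ∈ Sp p, v ∈ V p}` is closed under the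
bracket: it is a Lie subalgebra (the resonant subalgebra `𝔊_R = ⊕_p Sp p ⊗ V p`). -/
theorem resonant_subalgebra_closed {R L S I : Type*} [CommRing R] [LieRing L]
    [LieAlgebra R L] [CommSemigroup S]
    (B : (S →₀ L) →ₗ[R] (S →₀ L) →ₗ[R] (S →₀ L))
    (hB : ∀ (s t : S) (x y : L),
      B (Finsupp.single s x) (Finsupp.single t y) = Finsupp.single (s * t) ⁅x, y⁆)
    (V : I → Submodule R L) (idx : I → I → Set I)
    (hV : ∀ p q : I, ∀ x ∈ V p, ∀ y ∈ V q, ⁅x, y⁆ ∈ ⨆ r ∈ idx p q, V r)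
    (Sp : I → Set S)
    (hres : ∀ p q : I, ∀ s ∈ Sp p, ∀ t ∈ Sp q, ∀ r ∈ idx p q, s * t ∈ Sp r) :
    ∀ u v : S →₀ L,
      u ∈ Submodule.span R
        {f : S →₀ L | ∃ p : I, ∃ s ∈ Sp p, ∃ x ∈ V p, f = Finsupp.single s x} →
      v ∈ Submodule.span R
        {f : S →₀ L | ∃ p : I, ∃ s ∈ Sp p, ∃ x ∈ V p, f = Finsupp.single s x} →
      B u v ∈ Submodule.span R
        {f : S →₀ L | ∃ p : I, ∃ s ∈ Sp p, ∃ x ∈ V p, f = Finsupp.single s x} := by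
  intro u v hu hv
  refine Submodule.apply_mem_span_of_forall_mem_span B ?_ hu hv
  rintro _ ⟨p, s, hs, x, hx, rfl⟩ _ ⟨q, t, ht, y, hy, rfl⟩
  rw [hB]
  exact single_mem_resonantSpan_of_mem_iSup (hres p q s hs t ht) (hV p q x hx y hy)
end

section
/- (Vanishing lemma for the reduction of a resonant submultialgebra.) Let C, P : ι → I, i : (Fin n → I) → Set I, S, and (S_p)_{p ∈ I} be as in the resonance setting (C (a₁,…,aₙ) c ≠ 0 implies P(c) ∈ i(P(a₁),…,P(aₙ)), and S_{p₁}·⋯·S_{pₙ} ⊆ ⋂_{r ∈ i(p₁,…,pₙ)} S_r). Suppose each S_p is partitioned as S_p = Š_p ∪ Ŝ_p with Š_p ∩ Ŝ_p = ∅, and that for all p₁,…,pₙ ∈ I: Ŝ_{p₁}·Š_{p₂}·⋯·Š_{pₙ} ⊆ ⋂_{r ∈ i(p₁,…,pₙ)} Ŝ_r. Define C̃ ((a₁,α₁),…,(aₙ,αₙ)) (c,γ) = C (a₁,…,aₙ) c if α₁·⋯·αₙ = γ, and 0 otherwise. Then C̃ ((a₁,α₁),…,(aₙ,αₙ)) (c,γ)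 = 0 whenever α₁ ∈ Ŝ_{P(a₁)}, α_l ∈ Š_{P(a_l)} for l = 2,…,n, and γ ∈ Š_{P(c)}; i.e. [Ĝ_R, Ǧ_R, …, Ǧ_R] ⊆ Ĝ_R. -/
open scoped Classical

noncomputable section

/-- The `S`-expanded structure constants on `ι × S`:
`C̃ ((A₁,α₁),…,(Aₙ,αₙ)) (t,γ) = C (A₁,…,Aₙ) t` if `α₁·⋯·αₙ = γ` in `S`, else `0`. -/
def SExpandedC {k ι S : Type*} [CommRing k] [CommSemigroup S] {n : ℕ}
    (C : (Fin n → ι) → ι → k) : (Fin n → ι × S) → (ι × S) → k :=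
  fun A t =>
    if wprod (fun l => (A l).2) = ((t.2 : S) : WithOne S)
    then C (fun l => (A l).1) t.1 else 0

theorem SExpandedC_ne_zero_iff {k ι S : Type*} [CommRing k] [CommSemigroup S] {n : ℕ}
    {C : (Fin n → ι) → ι → k} {A : Fin n → ι × S} {t : ι × S} :
    SExpandedC C A t ≠ 0 ↔
      wprod (fun l => (A l).2) = ((t.2 : S) : WithOne S) ∧ C (fun l => (A l).1) t.1 ≠ 0 :=
  ite_ne_right_iff

theorem SExpandedC_eq_zero_of_notMem {k ι S : Type*} [CommRing k] [CommSemigroup S] {n : ℕ}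
    {C : (Fin n → ι) → ι → k} {A : Fin n → ι × S} {t : ι × S} {T : Set S}
    (hprod : C (fun l => (A l).1) t.1 ≠ 0 → ∃ u ∈ T, wprod (fun l => (A l).2) = (u : WithOne S))
    (ht : t.2 ∉ T) :
    SExpandedC C A t = 0 := by
  by_contra hne
  obtain ⟨hprod_eq, hC⟩ := SExpandedC_ne_zero_iff.mp hne
  obtain ⟨u, hu, hprod_u⟩ := hprod hC
  obtain rfl : t.2 = u := WithOne.coe_inj.mp (hprod_eq.symm.trans hprod_u)
  exact ht hu

theorem reduction_vanishing {k ι S I : Type*} [CommRing k] [CommSemigroup S] {n : ℕ}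
    (hn : 2 ≤ n)
    (C : (Fin n → ι) → ι → k) (P : ι → I) (idx : (Fin n → I) → Set I)
    (hstruct : ∀ (a : Fin n → ι) (c : ι), C a c ≠ 0 → P c ∈ idx (fun l => P (a l)))
    (Sc Sh : I → Set S)
    (hdisj : ∀ p : I, Sc p ∩ Sh p = ∅)
    (hred : ∀ (p : Fin n → I) (s : Fin n → S),
      s ⟨0, by omega⟩ ∈ Sh (p ⟨0, by omega⟩) →
      (∀ l : Fin n, (l : ℕ) ≠ 0 → s l ∈ Sc (p l)) →
      ∀ r ∈ idx p, ∃ u ∈ Sh r, wprod s = (u : WithOne S))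
    (a : Fin n → ι) (α : Fin n → S) (c : ι) (γ : S)
    (h1 : α ⟨0, by omega⟩ ∈ Sh (P (a ⟨0, by omega⟩)))
    (hl : ∀ l : Fin n, (l : ℕ) ≠ 0 → α l ∈ Sc (P (a l)))
    (hγ : γ ∈ Sc (P c)) :
    SExpandedC C (fun l => (a l, α l)) (c, γ) = 0 :=
  SExpandedC_eq_zero_of_notMem (T := Sh (P c))
    (fun hC => hred _ α h1 hl _ (hstruct a c hC))
    (fun hγ' => (hdisj (P c)).subset ⟨hγ, hγ'⟩)
end
end
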